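/- Let (a_n) be a nonincreasing interval-filling sequence. If (a_n) can be partitioned into two infinite subsequences (y_n) and (z_n), both fast convergent, then a_{n−1} + a_n > r_n for infinitely many n. -/

import Mathlib

open Set MeasureTheory Pointwise

/-- The achievement set (set of all subsums) of the series `∑ a n`. -/
noncomputable def achievementSet (a : ℕ → ℝ) : Set ℝ :=
  {x | ∃ I : Set ℕ, HasSum (fun i : I => a i) x}

/-- `tail a n` is the sum of the terms with index `≥ n`. -/
noncomputable def tail (a : ℕ → ℝ) (n : ℕ) : ℝ := ∑' i : ℕ, a (n + i)

/-- The set of `k`-initial subsums: sums over subsets of the first `k` terms. -/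
def Fset (a : ℕ → ℝ) (k : ℕ) : Set ℝ :=
  {x | ∃ I : Finset ℕ, I ⊆ Finset.range k ∧ x = ∑ i ∈ I, a i}

/-- The `k`-th iterate `I_k = ⋃_{f ∈ F_k} [f, f + r_k]`. -/
noncomputable def iter (a : ℕ → ℝ) (k : ℕ) : Set ℝ :=
  ⋃ f ∈ Fset a k, Set.Icc f (f + tail a k)

/-- A Cantor set: a nonempty compact perfect nowhere dense subset of `ℝ`. -/
def IsCantorSet (C : Set ℝ) : Prop :=
  C.Nonempty ∧ IsCompact C ∧ Perfect C ∧ interior C = ∅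

/-- A Cantorval: a nonempty compact set equal to the closure of its interior such that
both endpoints of every nontrivial connected component are accumulation points of
trivial (one-point) components. -/
def IsCantorval (P : Set ℝ) : Prop :=
  P.Nonempty ∧ IsCompact P ∧ P = closure (interior P) ∧
  ∀ x ∈ P, (connectedComponentIn P x).Nontrivial →
    ∀ y ∈ ({sInf (connectedComponentIn P x), sSup (connectedComponentIn P x)} : Set ℝ),
      ∀ ε > 0, ∃ z ∈ P, z ≠ y ∧ |z - y| < ε ∧ connectedComponentIn P z = {z}

/-- The subsequence of a indexed by M is interval-filling: each term is at most the
sum of the later terms of the subsequence. -/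
def SubIF (a : ℕ → ℝ) (M : Set ℕ) : Prop :=
  ∀ n ∈ M, a n ≤ ∑' i : {j : ℕ // j ∈ M ∧ n < j}, a i

/-- The subsequence of a indexed by M is fast convergent: each term exceeds the sum
of the later terms of the subsequence. -/
def SubFC (a : ℕ → ℝ) (M : Set ℕ) : Prop :=
  ∀ n ∈ M, (∑' i : {j : ℕ // j ∈ M ∧ n < j}, a i) < a n

lemma tail_eq_Ioi (a : ℕ → ℝ) (n : ℕ) :
    tail a (n+1) = ∑' j : Set.Ioi n, a j :=
  Equiv.tsum_eq (γ := ℕ) (β := Set.Ioi n)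
    { toFun := fun i => ⟨n+1+i, by simp only [Set.mem_Ioi]; omega⟩
      invFun := fun j => (j : ℕ) - (n+1)
      left_inv := fun i => by simp
      right_inv := fun j => by
        ext; have := j.2; simp only [Set.mem_Ioi] at this; simp; omega }
    (fun j : Set.Ioi n => a j)

lemma tail_split (a : ℕ → ℝ) (hsum : Summable a) (M : Set ℕ) (n : ℕ) :
    tail a (n+1) = (∑' j : ↥(M ∩ Set.Ioi n), a j) + ∑' j : ↥(Mᶜ ∩ Set.Ioi n), a j := by
  rw [tail_eq_Ioi]
  have hd : Disjoint (M ∩ Set.Ioi n) (Mᶜ ∩ Set.Ioi n) :=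
    disjoint_compl_right.mono inf_le_left inf_le_left
  have hu : (M ∩ Set.Ioi n) ∪ (Mᶜ ∩ Set.Ioi n) = Set.Ioi n := by
    rw [← Set.union_inter_distrib_right, Set.union_compl_self, Set.univ_inter]
  have h := Summable.tsum_union_disjoint (f := a) hd (hsum.subtype _) (hsum.subtype _)
  rw [hu] at h
  exact h

lemma subFC_as_inter (a : ℕ → ℝ) (M : Set ℕ) (hM : SubFC a M) (n : ℕ) (hn : n ∈ M) :
    (∑' j : ↥(M ∩ Set.Ioi n), a j) < a n := hM n hn

/-- If a nonincreasing interval-filling sequence decomposes into two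
infinite fast convergent subsequences, then a_{n-1} + a_n > r_n for infinitely many n. -/
theorem stmt_17 (a : ℕ → ℝ) (hpos : ∀ n, 0 < a n) (hmono : Antitone a)
    (hsum : Summable a) (hIF : ∀ n, a n ≤ tail a (n + 1))
    (M : Set ℕ) (hM : M.Infinite) (hMc : Mᶜ.Infinite)
    (hy : SubFC a M) (hz : SubFC a Mᶜ) :
    {n : ℕ | 1 ≤ n ∧ tail a (n + 1) < a (n - 1) + a n}.Infinite := by
  -- the set of "boundary" indices
  have hsub : {n : ℕ | 1 ≤ n ∧ ¬((n-1 ∈ M) ↔ (n ∈ M))} ⊆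
      {n : ℕ | 1 ≤ n ∧ tail a (n + 1) < a (n - 1) + a n} := by
    rintro n ⟨hn1, hne⟩
    refine ⟨hn1, ?_⟩
    rw [tail_split a hsum M n]
    rcases Classical.em (n ∈ M) with hnM | hnM
    · -- n ∈ M, n-1 ∉ M
      have hn1M : n - 1 ∈ Mᶜ := by
        intro h; exact hne ⟨fun _ => hnM, fun _ => h⟩
      have h1 : (∑' j : ↥(M ∩ Set.Ioi n), a j) < a n := subFC_as_inter a M hy n hnM
      have h2 : (∑' j : ↥(Mᶜ ∩ Set.Ioi (n-1)), a j) < a (n-1) :=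
        subFC_as_inter a Mᶜ hz (n-1) hn1M
      have hset : Mᶜ ∩ Set.Ioi (n-1) = Mᶜ ∩ Set.Ioi n := by
        ext j
        simp only [Set.mem_inter_iff, Set.mem_Ioi, Set.mem_compl_iff]
        constructor
        · rintro ⟨hj, hj2⟩
          refine ⟨hj, ?_⟩
          rcases Nat.lt_or_ge n j with h | h
          · exact h
          · exfalso; have : j = n := by omega
            exact hj (this ▸ hnM)
        · rintro ⟨hj, hj2⟩; exact ⟨hj, by omega⟩
      rw [hset] at h2
      linarith
    · -- n ∉ M, n-1 ∈ M
      have hn1M : n - 1 ∈ M := by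
        by_contra h; exact hne ⟨fun h' => absurd h' h, fun h' => absurd h' hnM⟩
      have h1 : (∑' j : ↥(Mᶜ ∩ Set.Ioi n), a j) < a n := subFC_as_inter a Mᶜ hz n hnM
      have h2 : (∑' j : ↥(M ∩ Set.Ioi (n-1)), a j) < a (n-1) :=
        subFC_as_inter a M hy (n-1) hn1M
      have hset : M ∩ Set.Ioi (n-1) = M ∩ Set.Ioi n := by
        ext j
        simp only [Set.mem_inter_iff, Set.mem_Ioi]
        constructor
        · rintro ⟨hj, hj2⟩
          refine ⟨hj, ?_⟩
          rcases Nat.lt_or_ge n j with h | h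
          · exact h
          · exfalso; have : j = n := by omega
            exact hnM (this ▸ hj)
        · rintro ⟨hj, hj2⟩; exact ⟨hj, by omega⟩
      rw [hset] at h2
      linarith
  refine Set.Infinite.mono hsub ?_
  by_contra hfin
  rw [Set.not_infinite] at hfin
  obtain ⟨N, hN⟩ := hfin.bddAbove
  -- for all n ≥ N+1, membership in M is constant
  have hconst : ∀ k, (N + 1 + k ∈ M ↔ N + 1 ∈ M) := by
    intro k
    induction k with
    | zero => rfl
    | succ k ih =>
      have hnB : N + 1 + (k+1) ∉ {n : ℕ | 1 ≤ n ∧ ¬((n-1 ∈ M) ↔ (n ∈ M))} := by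
        intro h; have := hN h; omega
      simp only [Set.mem_setOf_eq, not_and, not_not] at hnB
      have h2 : (N + 1 + (k+1) - 1 ∈ M) ↔ (N + 1 + (k+1) ∈ M) := hnB (by omega)
      have : N + 1 + (k+1) - 1 = N + 1 + k := by omega
      rw [this] at h2
      rw [← h2]; exact ih
  rcases Classical.em (N + 1 ∈ M) with hNM | hNM
  · -- Mᶜ finite
    apply hMc
    apply Set.Finite.subset (Set.finite_Iic N)
    intro m hm
    simp only [Set.mem_Iic]
    by_contra h
    have hm' : N + 1 + (m - (N+1)) = m := by omega
    have := (hconst (m - (N+1))).mpr hNM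
    rw [hm'] at this
    exact hm this
  · -- M finite
    apply hM
    apply Set.Finite.subset (Set.finite_Iic N)
    intro m hm
    simp only [Set.mem_Iic]
    by_contra h
    have hm' : N + 1 + (m - (N+1)) = m := by omega
    have := (hconst (m - (N+1))).mp (by rw [hm']; exact hm)
    exact hNM this
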